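/- arXiv:1507.01231 — 5 statements merged into one kernel-verified Lean document; each statement's English description precedes it below -/
import Mathlib

section
/- Let k be a positive integer and let D be a difference cover of [0..k). Then for any integers i and j, there exists d ∈ [0..k) such that (i + d) mod k ∈ D and (j + d) mod k ∈ D. -/
/-!
Given `i, j`, pick `y, z ∈ D` with `y - z ≡ i - j (mod k)` and shift by `d ≡ z - j`:
then `i + d ≡ y` and `j + d ≡ z`.
-/

/-- `D` is a difference cover of `[0..k)`: `D ⊆ {0, ..., k-1}` and for every
`x ∈ [0..k)` there are `y, z ∈ D` with `y - z ≡ x (mod k)`. -/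
def IsDiffCover (k : ℕ) (D : Finset ℕ) : Prop :=
  (∀ d ∈ D, d < k) ∧
    ∀ x < k, ∃ y ∈ D, ∃ z ∈ D, (y : ℤ) - (z : ℤ) ≡ (x : ℤ) [ZMOD k]

namespace Int

variable {k : ℕ}

lemma toNat_emod_lt (a : ℤ) (hk : 0 < k) : (a % k).toNat < k := by
  have := emod_lt_of_pos a (natCast_pos.mpr hk)
  omega

lemma natCast_toNat_emod_modEq (a : ℤ) (hk : 0 < k) : ((a % k).toNat : ℤ) ≡ a [ZMOD k] := by
  rw [toNat_of_nonneg (emod_nonneg a (natCast_ne_zero.mpr hk.ne'))]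
  exact mod_modEq a k

lemma toNat_emod_eq_of_modEq {a : ℤ} {y : ℕ} (h : a ≡ y [ZMOD k]) (hy : y < k) :
    (a % k).toNat = y := by
  rw [h, emod_eq_of_lt (natCast_nonneg y) (ofNat_lt.mpr hy), toNat_natCast]

end Int

lemma IsDiffCover.exists_sub_modEq {k : ℕ} {D : Finset ℕ} (hD : IsDiffCover k D) (hk : 0 < k)
    (t : ℤ) : ∃ y ∈ D, ∃ z ∈ D, (y : ℤ) - z ≡ t [ZMOD k] := by
  obtain ⟨y, hy, z, hz, hyz⟩ := hD.2 _ (Int.toNat_emod_lt t hk)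
  exact ⟨y, hy, z, hz, hyz.trans (Int.natCast_toNat_emod_modEq t hk)⟩

/-- For any difference cover `D` of `[0..k)` and any integers `i, j`, there is
`d ∈ [0..k)` such that `(i + d) mod k ∈ D` and `(j + d) mod k ∈ D`. -/
theorem diff_cover_shift (k : ℕ) (hk : 0 < k) (D : Finset ℕ) (hD : IsDiffCover k D)
    (i j : ℤ) :
    ∃ d : ℕ, d < k ∧ ((i + d) % (k : ℤ)).toNat ∈ D ∧ ((j + d) % (k : ℤ)).toNat ∈ D := by
  obtain ⟨y, hy, z, hz, hyz⟩ := hD.exists_sub_modEq hk (i - j)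
  set d := (((z : ℤ) - j) % k).toNat
  have hd : (d : ℤ) ≡ z - j [ZMOD k] := Int.natCast_toNat_emod_modEq _ hk
  refine ⟨d, Int.toNat_emod_lt _ hk, ?_, ?_⟩
  · have hi : i + d ≡ y [ZMOD k] := calc
      i + d ≡ i + (z - j) [ZMOD k] := hd.add_left i
      _ = z + (i - j) := by ring
      _ ≡ z + (y - z) [ZMOD k] := hyz.symm.add_left _
      _ = y := by ring
    rwa [Int.toNat_emod_eq_of_modEq hi (hD.1 y hy)]
  · have hj : j + d ≡ z [ZMOD k] := calc
      j + d ≡ j + (z - j) [ZMOD k] := hd.add_left j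
      _ = z := by ring
    rwa [Int.toNat_emod_eq_of_modEq hj (hD.1 z hz)]
end

section
/- Let k be a positive integer and set r = ⌊√k⌋. Then the set D = {x ∈ [0..k) : x ≤ r} ∪ {x ∈ [0..k) : r divides x} is a difference cover of [0..k). -/
def simpleDiffCover (k r : ℕ) : Finset ℕ :=
  (Finset.range k).filter (fun x => x ≤ r) ∪ (Finset.range k).filter (fun x => r ∣ x)

theorem mem_simpleDiffCover {k r d : ℕ} :
    d ∈ simpleDiffCover k r ↔ d < k ∧ (d ≤ r ∨ r ∣ d) := by
  simp only [simpleDiffCover, Finset.mem_union, Finset.mem_filter, Finset.mem_range, and_or_left]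

theorem isDiffCover_simpleDiffCover {k r : ℕ} (hr : 0 < r) (hrk : r ≤ k) :
    IsDiffCover k (simpleDiffCover k r) := by
  refine ⟨fun d hd => (mem_simpleDiffCover.1 hd).1, fun x hx => ?_⟩
  obtain ⟨m, hm, s, hs, rfl⟩ : ∃ m, r ∣ m ∧ ∃ s < r, x = m + s :=
    ⟨r * (x / r), dvd_mul_right _ _, x % r, Nat.mod_lt x hr, (Nat.div_add_mod x r).symm⟩
  rcases Nat.eq_zero_or_pos s with rfl | hs0
  · exact ⟨m, mem_simpleDiffCover.2 ⟨hx, .inr hm⟩, 0,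
      mem_simpleDiffCover.2 ⟨by omega, .inl (Nat.zero_le r)⟩, by simp⟩
  have hz : r - s ∈ simpleDiffCover k r := mem_simpleDiffCover.2 ⟨by omega, .inl (Nat.sub_le r s)⟩
  by_cases hy : m + r < k
  · refine ⟨m + r, mem_simpleDiffCover.2 ⟨hy, .inr (dvd_add hm dvd_rfl)⟩, r - s, hz, ?_⟩
    rw [show ((m + r : ℕ) : ℤ) - ((r - s : ℕ) : ℤ) = ((m + s : ℕ) : ℤ) by omega]
  · refine ⟨m + r - k, mem_simpleDiffCover.2 ⟨by omega, .inl (by omega)⟩, r - s, hz, ?_⟩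
    rw [show ((m + r - k : ℕ) : ℤ) - ((r - s : ℕ) : ℤ) = ((m + s : ℕ) : ℤ) - k by omega]
    exact Int.sub_emod_right _ _

/-- For `r = ⌊√k⌋`, the set `{x ∈ [0..k) : x ≤ r} ∪ {x ∈ [0..k) : r ∣ x}` is a
difference cover of `[0..k)`. -/
theorem simple_diff_cover (k : ℕ) (hk : 0 < k) :
    IsDiffCover k
      ((Finset.range k).filter (fun x => x ≤ Nat.sqrt k) ∪
        (Finset.range k).filter (fun x => Nat.sqrt k ∣ x)) :=
  isDiffCover_simpleDiffCover (Nat.sqrt_pos.2 hk) (Nat.sqrt_le_self k)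
end

section
/- For every positive integer k there exists a difference cover D of [0..k) with |D| ≤ 2⌊√k⌋ + 3 (in particular, a difference cover with O(√k) elements). -/
open Finset

def babyGiantSteps (k m n : ℕ) : Finset ℕ :=
  range m ∪ (range (n + 1)).image (fun q => q * m % k)

theorem Nat.exists_add_eq_mul_of_le_mul {m n x : ℕ} (hm : 0 < m) (hx : x ≤ m * n) :
    ∃ q ≤ n, ∃ s < m, x + s = q * m := by
  obtain ⟨a, b, hb, rfl⟩ : ∃ a b, b < m ∧ x = a * m + b :=
    ⟨x / m, x % m, Nat.mod_lt x hm, by rw [mul_comm, Nat.div_add_mod]⟩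
  rcases Nat.eq_zero_or_pos b with rfl | hb0
  · refine ⟨a, ?_, 0, hm, by simp⟩
    rw [add_zero, mul_comm m] at hx
    exact Nat.le_of_mul_le_mul_right hx hm
  · refine ⟨a + 1, ?_, m - b, by omega, by rw [add_mul]; omega⟩
    rw [mul_comm m] at hx
    exact Nat.lt_of_mul_lt_mul_right (by omega : a * m < n * m)

theorem card_babyGiantSteps_le (k m n : ℕ) : #(babyGiantSteps k m n) ≤ m + n + 1 :=
  calc #(babyGiantSteps k m n)
      ≤ #(range m) + #((range (n + 1)).image (fun q => q * m % k)) := card_union_le _ _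
    _ ≤ m + (n + 1) := by grw [card_image_le, card_range, card_range]
    _ = m + n + 1 := by ring

theorem isDiffCover_babyGiantSteps {k m n : ℕ} (hm : 0 < m) (hmk : m ≤ k)
    (hkmn : k ≤ m * n + 1) : IsDiffCover k (babyGiantSteps k m n) := by
  refine ⟨fun d hd => ?_, fun x hx => ?_⟩
  · simp only [babyGiantSteps, mem_union, mem_range, mem_image] at hd
    rcases hd with hd | ⟨q, -, rfl⟩
    · omega
    · exact Nat.mod_lt _ (by omega)
  · obtain ⟨q, hq, s, hs, hxs⟩ := Nat.exists_add_eq_mul_of_le_mul hm (by omega : x ≤ m * n)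
    refine ⟨q * m % k, mem_union_right _ (mem_image_of_mem _ (mem_range.2 (by omega))),
      s, mem_union_left _ (mem_range.2 hs), ?_⟩
    have hx : (x : ℤ) = (q * m : ℕ) - s := by omega
    rw [hx]
    exact (Int.natCast_modEq_iff.2 (Nat.mod_modEq _ _)).sub_right _

/-- Every `[0..k)` has a difference cover with at most `2⌊√k⌋ + 3` elements
(in particular, with `O(√k)` elements). -/
theorem exists_small_diff_cover (k : ℕ) (hk : 0 < k) :
    ∃ D : Finset ℕ, IsDiffCover k D ∧ D.card ≤ 2 * Nat.sqrt k + 3 := by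
  set r := Nat.sqrt k
  have hk_lt : k < (r + 1) * (r + 1) := Nat.lt_succ_sqrt k
  refine ⟨babyGiantSteps k r (r + 2), isDiffCover_babyGiantSteps (Nat.sqrt_pos.2 hk)
    (Nat.sqrt_le_self k) (by nlinarith), ?_⟩
  grw [card_babyGiantSteps_le]
  omega
end

section
/- Let s₁, s₂, ..., s_m be lists over a linearly ordered alphabet that are sorted in non-decreasing lexicographic order (s₁ ≤lex s₂ ≤lex ... ≤lex s_m, where a proper prefix precedes its extensions). Then for any indices 1 ≤ j < k ≤ m, the length of the longest common prefix of s_j and s_k equals min{ lcp(s_l, s_{l+1}) : j ≤ l < k }, where lcp(s, t) denotes the length of the longest common prefix of s and t. -/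
/-!
If `a ≤ b ≤ c` lexicographically, then `b` is squeezed between `a` and `c` and so shares every
common prefix of `a` and `c`; hence `lcp a c = min (lcp a b) (lcp b c)`. Induction on `k` along
the sorted sequence turns this into the minimum over consecutive pairs.
-/

/-- The length of the longest common prefix of two lists, i.e. the largest `ℓ`
such that `take ℓ s = take ℓ t`. -/
def lcp {α : Type*} [DecidableEq α] : List α → List α → ℕ
  | a :: s, b :: t => if a = b then lcp s t + 1 else 0
  | _, _ => 0

section DecidableEq

variable {α : Type*} [DecidableEq α]

@[simp]
lemma lcp_nil_left (t : List α) : lcp [] t = 0 := by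
  cases t <;> rfl

@[simp]
lemma lcp_cons_cons (a b : α) (s t : List α) :
    lcp (a :: s) (b :: t) = if a = b then lcp s t + 1 else 0 :=
  rfl

end DecidableEq

section LinearOrder

variable {α : Type*} [LinearOrder α]

lemma List.cons_le_cons_iff_lex {x y : α} {s t : List α} :
    x :: s ≤ y :: t ↔ x < y ∨ x = y ∧ s ≤ t := by
  simp only [le_iff_lt_or_eq, List.cons_lt_cons_iff, List.cons_eq_cons]
  tauto

theorem lcp_eq_min_of_le_of_le :
    ∀ {a b c : List α}, a ≤ b → b ≤ c → lcp a c = min (lcp a b) (lcp b c)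
  | [], _, _, _, _ => by simp
  | _ :: _, [], _, hab, _ => absurd hab (List.nil_lt_cons _ _).not_ge
  | _, _ :: _, [], _, hbc => absurd hbc (List.nil_lt_cons _ _).not_ge
  | x :: a, y :: b, z :: c, hab, hbc => by
    rw [List.cons_le_cons_iff_lex] at hab hbc
    rcases hab with hxy | ⟨rfl, hab⟩
    · have hxz : x < z := hxy.trans_le (hbc.elim le_of_lt fun h => h.1.le)
      simp [hxy.ne, hxz.ne]
    rcases hbc with hxz | ⟨rfl, hbc⟩
    · simp [hxz.ne]
    · simp [lcp_eq_min_of_le_of_le hab hbc, Nat.add_min_add_right]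

end LinearOrder

/-- If `s 1 ≤ s 2 ≤ ⋯ ≤ s m` in lexicographic order, then for `1 ≤ j < k ≤ m`
the length of the longest common prefix of `s j` and `s k` equals
`min { lcp (s l) (s (l+1)) : j ≤ l < k }`. -/
theorem lcp_sorted_min {α : Type*} [LinearOrder α] (m : ℕ) (s : ℕ → List α)
    (hsorted : ∀ i j, 1 ≤ i → i ≤ j → j ≤ m → s i ≤ s j)
    (j k : ℕ) (hj : 1 ≤ j) (hjk : j < k) (hk : k ≤ m) :
    lcp (s j) (s k) =
      (Finset.Ico j k).inf' (Finset.nonempty_Ico.2 hjk)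
        (fun l => lcp (s l) (s (l + 1))) := by
  induction k, hjk using Nat.le_induction with
  | base => simp
  | succ k hjk ih =>
    simp only [Nat.Ico_succ_right_eq_insert_Ico (by omega : j ≤ k)]
    rw [Finset.inf'_insert (H := Finset.nonempty_Ico.2 hjk), ← ih (by omega), min_comm]
    exact lcp_eq_min_of_le_of_le (hsorted j k hj (by omega) (by omega))
      (hsorted k (k + 1) (by omega) k.le_succ hk)
end

section
/- Let w be a nonempty list over a linearly ordered alphabet whose last element is strictly smaller than every other element of w. Then for any two distinct positions 0 ≤ i < j < |w|, the suffix drop j w is not a prefix of the suffix drop i w, and drop i w is not a prefix of drop j w; consequently, any two distinct suffixes of w are strictly comparable in lexicographic order and pairwise distinct. -/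
namespace List

variable {α : Type*}

theorem not_drop_prefix_drop_of_lt {w : List α} {i j : ℕ} (hij : i < j) (hj : j < w.length) :
    ¬ w.drop i <+: w.drop j := fun hp => by
  have := hp.length_le
  simp only [length_drop] at this
  omega

/-- Were `drop j w` a prefix of `drop i w`, the last letter of `w`, which ends `drop j w`, would
also occur in `w` at the earlier position `i + (|w| - j - 1)`. -/
theorem not_drop_prefix_drop_of_getLast_lt [Preorder α] {w : List α} (hne : w ≠ [])
    (hlast : ∀ k (hk : k < w.length - 1), w.getLast hne < w[k]) {i j : ℕ} (hij : i < j)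
    (hj : j < w.length) :
    ¬ w.drop j <+: w.drop i := by
  intro hp
  set k := w.length - j - 1
  have hk : k < (w.drop j).length := by simp only [length_drop]; omega
  have hshift : w[i + k] = w[j + k] := by simpa using (hp.getElem hk).symm
  have hend : w[j + k] = w.getLast hne := by rw [getLast_eq_getElem]; congr 1; omega
  exact lt_irrefl _ (hshift ▸ hend ▸ hlast (i + k) (by omega))

end List

/-- If the last element of a nonempty list `w` is strictly smaller than every
other element of `w`, then for any positions `i < j < |w|` neither of the
suffixes `drop i w`, `drop j w` is a prefix of the other; consequently the two
suffixes are strictly comparable in lexicographic order and distinct. -/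
theorem suffixes_not_prefix_of_small_last {α : Type*} [LinearOrder α]
    (w : List α) (hne : w ≠ [])
    (hlast : ∀ i : ℕ, (hi : i + 1 < w.length) → w.getLast hne < w.get ⟨i, by omega⟩)
    (i j : ℕ) (hij : i < j) (hj : j < w.length) :
    ¬ (w.drop j <+: w.drop i) ∧ ¬ (w.drop i <+: w.drop j) ∧
      (w.drop i < w.drop j ∨ w.drop j < w.drop i) ∧ w.drop i ≠ w.drop j := by
  have hji := List.not_drop_prefix_drop_of_getLast_lt hne (fun k hk => hlast k (by omega)) hij hj
  have hij' := List.not_drop_prefix_drop_of_lt hij hj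
  have hdrop_ne : w.drop i ≠ w.drop j := fun h => hij' (h ▸ List.prefix_refl _)
  exact ⟨hji, hij', lt_or_gt_of_ne hdrop_ne, hdrop_ne⟩
end
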